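/- The total variation distance between the hypergeometric distribution H(n, m, k) (drawing k balls from n with m red) and the binomial distribution B(k, m/n) is at most k/n. -/

import Mathlib

/-- The hypergeometric pmf: probability of `i` red balls when drawing `k` balls
without replacement from `n` balls, `m` of which are red. -/
noncomputable def hypPMF (n m k i : ℕ) : ℝ :=
  ((m.choose i : ℝ) * ((n - m).choose (k - i) : ℝ)) / (n.choose k : ℝ)

/-- The binomial pmf with `k` trials and success probability `p`. -/
noncomputable def binPMF (k : ℕ) (p : ℝ) (i : ℕ) : ℝ :=
  (k.choose i : ℝ) * p ^ i * (1 - p) ^ (k - i)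

/-!
Ehm's Stein-method argument, which gives the sharper bound `k (k - 1) / ((k + 1) (n - 1))`.
Let `p = m / n`, let `b` and `h` be the binomial and hypergeometric pmfs, and let
`c x = p (k - x) h x - (1 - p) (x + 1) h (x + 1)` measure how far `h` is from satisfying the
binomial recurrence, with partial sums `C i = ∑_{x ≤ i} c x`.

The distance is `∑ χ (h - b)` for the indicator `χ` of `{b ≤ h}`. Solving the binomial Stein
equation for `χ - E_b χ` and summing by parts twice gives
`∑ χ (h - b) = ∑_{i < k - 1} (F (i + 1) - F i) (-C i)` for the Stein solution `F`.
The hypergeometric recurrence `(n - m - k + x + 1) (x + 1) h (x + 1) = (m - x) (k - x) h x` makes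
`n c` telescope, so `C i = -(i + 1) (k - i - 1) h (i + 1) / n ≤ 0` and
`∑ (-C i) = E[X (k - X)] / n = k (k - 1) p (1 - p) / (n - 1)`. Ehm's estimate
`F (i + 1) - F i ≤ 1 / ((k + 1) p (1 - p))`, obtained by comparing binomial tails for `k` and
`k + 1` trials, finishes the proof.
-/

open Finset

lemma choose_succ_right_eq_cast (a x : ℕ) :
    (a.choose (x + 1) : ℝ) * (x + 1) = a.choose x * ((a : ℝ) - x) := by
  rcases le_or_gt x a with h | h
  · rw [← Nat.cast_sub h]; exact_mod_cast Nat.choose_succ_right_eq a x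
  · rw [Nat.choose_eq_zero_of_lt h, Nat.choose_eq_zero_of_lt (by omega)]; simp

lemma choose_mul_succ_eq_cast (a x : ℕ) :
    (a.choose x : ℝ) * (a + 1) = (a + 1).choose x * ((a : ℝ) + 1 - x) := by
  rcases le_or_gt x (a + 1) with h | h
  · have := Nat.choose_mul_succ_eq a x
    rw [← Nat.cast_add_one, ← Nat.cast_sub h]; exact_mod_cast this
  · rw [Nat.choose_eq_zero_of_lt h, Nat.choose_eq_zero_of_lt (by omega)]; simp

lemma half_sum_abs_sub_eq_sum_posPart {ι : Type*} (s : Finset ι) (u v : ι → ℝ)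
    (h : ∑ i ∈ s, u i = ∑ i ∈ s, v i) :
    1 / 2 * ∑ i ∈ s, |u i - v i| = ∑ i ∈ s, (u i - v i)⁺ := by
  have habs (a : ℝ) : |a| = 2 * a⁺ - a := by
    linarith [posPart_add_negPart a, posPart_sub_negPart a]
  simp only [habs, sum_sub_distrib, ← mul_sum, h, sub_self]
  ring

lemma posPart_eq_ite_mul (a : ℝ) : a⁺ = (if 0 ≤ a then 1 else 0) * a := by
  split_ifs with h
  · rw [posPart_eq_self.mpr h, one_mul]
  · rw [posPart_eq_zero.mpr (not_le.mp h).le, zero_mul]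

section Binomial

variable {k : ℕ} {p : ℝ}

lemma binPMF_nonneg (hp0 : 0 ≤ p) (hp1 : p ≤ 1) (x : ℕ) : 0 ≤ binPMF k p x := by
  have : 0 ≤ 1 - p := by linarith
  unfold binPMF; positivity

lemma binPMF_pos (hp0 : 0 < p) (hp1 : p < 1) {x : ℕ} (hx : x ≤ k) : 0 < binPMF k p x := by
  have : 0 < 1 - p := by linarith
  have : (0 : ℝ) < k.choose x := by exact_mod_cast Nat.choose_pos hx
  unfold binPMF; positivity

variable (k p)

lemma sum_binPMF : ∑ x ∈ range (k + 1), binPMF k p x = 1 := by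
  have h := (add_pow p (1 - p) k).symm
  rw [add_sub_cancel, one_pow] at h
  rw [← h]
  exact sum_congr rfl fun x _ => by unfold binPMF; ring

lemma binPMF_succ_mul (x : ℕ) :
    (1 - p) * (x + 1) * binPMF k p (x + 1) = p * (k - x) * binPMF k p x := by
  have hc := choose_succ_right_eq_cast k x
  unfold binPMF
  rcases lt_or_ge x k with h | h
  · obtain ⟨j, hj⟩ : ∃ j, k - x = j + 1 := ⟨k - x - 1, by omega⟩
    rw [hj, show k - (x + 1) = j by omega]
    linear_combination (p ^ (x + 1) * (1 - p) ^ (j + 1)) * hc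
  · rw [Nat.choose_eq_zero_of_lt (by omega : k < x + 1), Nat.cast_zero] at hc ⊢
    linear_combination (p ^ (x + 1) * (1 - p) ^ (k - x)) * hc

lemma one_sub_mul_binPMF (x : ℕ) :
    (k + 1) * ((1 - p) * binPMF k p x) = (k + 1 - x) * binPMF (k + 1) p x := by
  have hc := choose_mul_succ_eq_cast k x
  unfold binPMF
  rcases le_or_gt x k with h | h
  · rw [show k + 1 - x = k - x + 1 by omega]
    linear_combination (p ^ x * (1 - p) ^ (k - x + 1)) * hc
  · rw [Nat.choose_eq_zero_of_lt h, Nat.cast_zero] at hc ⊢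
    linear_combination (p ^ x * (1 - p) ^ (k + 1 - x)) * hc

lemma mul_binPMF (x : ℕ) :
    (k + 1) * (p * binPMF k p x) = (x + 1) * binPMF (k + 1) p (x + 1) := by
  have hc : ((k + 1 : ℕ) : ℝ) * k.choose x = (k + 1).choose (x + 1) * ((x + 1 : ℕ) : ℝ) := by
    exact_mod_cast Nat.add_one_mul_choose_eq k x
  push_cast at hc
  unfold binPMF
  rw [show k + 1 - (x + 1) = k - x by omega]
  linear_combination (p ^ (x + 1) * (1 - p) ^ (k - x)) * hc

variable {k p}

lemma binPMF_lower_tail_le (hp0 : 0 ≤ p) (hp1 : p ≤ 1) (z : ℕ) :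
    p * (k - z) * ∑ y ∈ range z, binPMF k p y
      ≤ (1 - p) * z * ∑ y ∈ range (z + 1), binPMF k p y := by
  have hb := binPMF_nonneg (k := k) hp0 hp1
  have hq : 0 ≤ 1 - p := by linarith
  calc p * (k - z) * ∑ y ∈ range z, binPMF k p y
      ≤ ∑ y ∈ range z, (1 - p) * z * binPMF k p (y + 1) := by
        rw [mul_sum]
        refine sum_le_sum fun y hy => ?_
        have hyz : (y : ℝ) + 1 ≤ z := by exact_mod_cast mem_range.mp hy
        have := binPMF_succ_mul k p y
        nlinarith [mul_nonneg hp0 (hb y), mul_nonneg hq (hb (y + 1))]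
    _ ≤ (1 - p) * z * ∑ y ∈ range (z + 1), binPMF k p y := by
        rw [sum_range_succ', ← mul_sum]
        nlinarith [mul_nonneg (mul_nonneg hq (Nat.cast_nonneg z)) (hb 0)]

lemma binPMF_upper_tail_le (hp0 : 0 ≤ p) (hp1 : p ≤ 1) {z : ℕ} (hz : z ≤ k) :
    (1 - p) * z * ∑ y ∈ Ico (z + 1) (k + 1), binPMF k p y
      ≤ p * (k - z) * ∑ y ∈ Ico z (k + 1), binPMF k p y := by
  have hb := binPMF_nonneg (k := k) hp0 hp1
  have hq : 0 ≤ 1 - p := by linarith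
  have hkz : (0 : ℝ) ≤ k - z := by rw [sub_nonneg]; exact_mod_cast hz
  calc (1 - p) * z * ∑ y ∈ Ico (z + 1) (k + 1), binPMF k p y
      = ∑ y ∈ Ico z k, (1 - p) * z * binPMF k p (y + 1) := by
        rw [← sum_Ico_add', mul_sum]
    _ ≤ ∑ y ∈ Ico z k, p * (k - z) * binPMF k p y := by
        refine sum_le_sum fun y hy => ?_
        have hzy : (z : ℝ) ≤ y := by exact_mod_cast (mem_Ico.mp hy).1
        have := binPMF_succ_mul k p y
        nlinarith [mul_nonneg hp0 (hb y), mul_nonneg hq (hb (y + 1))]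
    _ ≤ p * (k - z) * ∑ y ∈ Ico z (k + 1), binPMF k p y := by
        rw [sum_Ico_succ_top hz, ← mul_sum]
        nlinarith [mul_nonneg (mul_nonneg hp0 hkz) (hb k)]

/-- Both tails are rewritten as tails of the binomial law with `k + 1` trials. -/
lemma binPMF_two_tails_le (hp0 : 0 ≤ p) (hp1 : p ≤ 1) {z : ℕ} (hz : z ≤ k) :
    (1 - p) * z * ∑ y ∈ Ico (z + 1) (k + 1), binPMF k p y
      + p * (k - z) * ∑ y ∈ range z, binPMF k p y ≤ z * (k - z) / (k + 1) := by
  have hb := binPMF_nonneg (k := k + 1) hp0 hp1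
  have hkz : (0 : ℝ) ≤ k - z := by rw [sub_nonneg]; exact_mod_cast hz
  have hz0 : (0 : ℝ) ≤ z := Nat.cast_nonneg z
  have upper : (k + 1) * ((1 - p) * z * ∑ y ∈ Ico (z + 1) (k + 1), binPMF k p y)
      ≤ z * (k - z) * ∑ y ∈ Ico z k, binPMF (k + 1) p (y + 1) := by
    rw [← sum_Ico_add', mul_sum, mul_sum, mul_sum]
    refine sum_le_sum fun y hy => ?_
    have hzy : (z : ℝ) ≤ y := by exact_mod_cast (mem_Ico.mp hy).1
    have := one_sub_mul_binPMF k p (y + 1)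
    push_cast at this
    nlinarith [mul_nonneg hz0 (hb (y + 1))]
  have lower : (k + 1) * (p * (k - z) * ∑ y ∈ range z, binPMF k p y)
      ≤ z * (k - z) * ∑ y ∈ range z, binPMF (k + 1) p (y + 1) := by
    rw [mul_sum, mul_sum, mul_sum]
    refine sum_le_sum fun y hy => ?_
    have hyz : (y : ℝ) + 1 ≤ z := by exact_mod_cast mem_range.mp hy
    have := mul_binPMF k p y
    nlinarith [mul_nonneg hkz (hb (y + 1))]
  have total : ∑ y ∈ range z, binPMF (k + 1) p (y + 1)
      + ∑ y ∈ Ico z k, binPMF (k + 1) p (y + 1) ≤ 1 := by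
    rw [sum_range_add_sum_Ico _ hz, ← sum_binPMF (k + 1) p, sum_range_succ' _ (k + 1),
      sum_range_succ]
    linarith [hb 0, hb (k + 1)]
  rw [le_div_iff₀ (by positivity)]
  nlinarith [mul_nonneg hz0 hkz]

end Binomial

section Stein

/-- Pairing `h` with the binomial Stein operator `f ↦ p (k - x) f (x + 1) - (1 - p) x f x` gives,
after summation by parts, `∑ x ∈ range k, binSteinDefect k p h x * f (x + 1)`. -/
noncomputable def binSteinDefect (k : ℕ) (p : ℝ) (h : ℕ → ℝ) (x : ℕ) : ℝ :=
  p * (k - x) * h x - (1 - p) * (x + 1) * h (x + 1)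

/-- `binSteinSol k p g x = f (x + 1)`, where `f` solves the binomial Stein equation
`p (k - x) f (x + 1) - (1 - p) x f x = g x` for `x ≤ k`, provided `g` has binomial mean zero. -/
noncomputable def binSteinSol (k : ℕ) (p : ℝ) (g : ℕ → ℝ) (x : ℕ) : ℝ :=
  (∑ y ∈ range (x + 1), binPMF k p y * g y) / (p * (k - x) * binPMF k p x)

variable {k : ℕ} {p : ℝ}

lemma sum_mul_eq_sum_binSteinDefect_mul (hp0 : 0 < p) (hp1 : p < 1) (h g : ℕ → ℝ)
    (hg : ∑ y ∈ range (k + 1), binPMF k p y * g y = 0) :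
    ∑ x ∈ range (k + 1), h x * g x
      = ∑ x ∈ range k, binSteinDefect k p h x * binSteinSol k p g x := by
  set ρ : ℕ → ℝ := fun x => h x / binPMF k p x
  calc ∑ x ∈ range (k + 1), h x * g x
      = ∑ x ∈ range (k + 1), ρ x • (binPMF k p x * g x) := by
        refine sum_congr rfl fun x hx => ?_
        have := (binPMF_pos hp0 hp1 (Nat.lt_succ_iff.mp (mem_range.mp hx))).ne'
        simp only [ρ, smul_eq_mul]
        field_simp
    _ = ∑ x ∈ range k, (ρ x - ρ (x + 1)) * ∑ y ∈ range (x + 1), binPMF k p y * g y := by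
        rw [sum_range_by_parts, Nat.add_sub_cancel, hg, smul_zero, zero_sub, ← sum_neg_distrib]
        exact sum_congr rfl fun x _ => by rw [smul_eq_mul]; ring
    _ = ∑ x ∈ range k, binSteinDefect k p h x * binSteinSol k p g x := by
        refine sum_congr rfl fun x hx => ?_
        have hx := mem_range.mp hx
        have hb := (binPMF_pos hp0 hp1 hx.le).ne'
        have hb1 := (binPMF_pos hp0 hp1 (Nat.succ_le_of_lt hx)).ne'
        have hkx : (k : ℝ) - x ≠ 0 := sub_ne_zero.mpr (by exact_mod_cast hx.ne')
        have hrec := binPMF_succ_mul k p x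
        simp only [ρ, binSteinDefect, binSteinSol]
        field_simp
        linear_combination (h (x + 1) * ∑ y ∈ range (x + 1), binPMF k p y * g y) * hrec

/-- The left side is the numerator of `binSteinSol (z) - binSteinSol (z - 1)` over the common
denominator `p (1 - p) z (k - z) (binPMF k p z)`. -/
lemma binSteinSol_numerator_le (hp0 : 0 ≤ p) (hp1 : p ≤ 1) {χ : ℕ → ℝ} (hχ0 : ∀ x, 0 ≤ χ x)
    (hχ1 : ∀ x, χ x ≤ 1) {z : ℕ} (hz : z ≤ k) :
    (1 - p) * z * ∑ y ∈ range (z + 1),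
        binPMF k p y * (χ y - ∑ j ∈ range (k + 1), binPMF k p j * χ j)
      - p * (k - z) * ∑ y ∈ range z,
        binPMF k p y * (χ y - ∑ j ∈ range (k + 1), binPMF k p j * χ j)
      ≤ binPMF k p z * ((1 - p) * z * ∑ y ∈ Ico (z + 1) (k + 1), binPMF k p y
        + p * (k - z) * ∑ y ∈ range z, binPMF k p y) := by
  have hb := binPMF_nonneg (k := k) hp0 hp1
  set β := ∑ j ∈ range (k + 1), binPMF k p j * χ j
  set L := ∑ y ∈ range z, binPMF k p y
  set U := ∑ y ∈ Ico (z + 1) (k + 1), binPMF k p y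
  set a := ∑ y ∈ range z, binPMF k p y * χ y
  set d := ∑ y ∈ Ico (z + 1) (k + 1), binPMF k p y * χ y
  have hM1 : ∑ y ∈ range (z + 1), binPMF k p y * (χ y - β)
      = a + binPMF k p z * χ z - β * (L + binPMF k p z) := by
    simp only [mul_sub, sum_sub_distrib, ← sum_mul, sum_range_succ]; ring
  have hM0 : ∑ y ∈ range z, binPMF k p y * (χ y - β) = a - β * L := by
    simp only [mul_sub, sum_sub_distrib, ← sum_mul]; ring
  have hβ : β = a + binPMF k p z * χ z + d := by
    simp only [β, ← sum_range_add_sum_Ico _ (by omega : z + 1 ≤ k + 1), sum_range_succ]; rfl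
  have htot : L + binPMF k p z + U = 1 := by
    rw [← sum_binPMF k p, ← sum_range_add_sum_Ico _ (by omega : z + 1 ≤ k + 1), sum_range_succ]
  have hR : p * (k - z) * L ≤ (1 - p) * z * (L + binPMF k p z) := by
    have := binPMF_lower_tail_le (k := k) hp0 hp1 z
    rwa [sum_range_succ] at this
  have hR' : (1 - p) * z * U ≤ p * (k - z) * (binPMF k p z + U) := by
    have := binPMF_upper_tail_le hp0 hp1 hz
    rwa [sum_eq_sum_Ico_succ_bot (by omega : z < k + 1)] at this
  have hL : 0 ≤ L := sum_nonneg fun y _ => hb y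
  have hU : 0 ≤ U := sum_nonneg fun y _ => hb y
  have ha : 0 ≤ a := sum_nonneg fun y _ => mul_nonneg (hb y) (hχ0 y)
  have hd : 0 ≤ d := sum_nonneg fun y _ => mul_nonneg (hb y) (hχ0 y)
  have hkz : (0 : ℝ) ≤ k - z := by rw [sub_nonneg]; exact_mod_cast hz
  have hqU : 0 ≤ (1 - p) * z * U + p * (k - z) * L := by
    have : 0 ≤ 1 - p := by linarith
    positivity
  -- with `R = (1 - p) z (L + b z) - p (k - z) L ≥ 0` the left side is
  -- `b z χ z ((1 - p) z - R) + a ((1 - p) z - p (k - z) - R) - d R`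
  rw [hM1, hM0, hβ, show U = 1 - L - binPMF k p z by linarith] at *
  linarith [mul_nonneg (mul_nonneg (sub_nonneg.mpr (hχ1 z)) (hb z)) hqU,
    mul_nonneg ha (sub_nonneg.mpr hR'), mul_nonneg hd (sub_nonneg.mpr hR)]

lemma binSteinSol_succ_sub_le (hp0 : 0 < p) (hp1 : p < 1) {χ : ℕ → ℝ} (hχ0 : ∀ x, 0 ≤ χ x)
    (hχ1 : ∀ x, χ x ≤ 1) {i : ℕ} (hi : i + 1 < k) :
    binSteinSol k p (fun x => χ x - ∑ j ∈ range (k + 1), binPMF k p j * χ j) (i + 1)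
      - binSteinSol k p (fun x => χ x - ∑ j ∈ range (k + 1), binPMF k p j * χ j) i
      ≤ 1 / ((k + 1) * p * (1 - p)) := by
  set z := i + 1 with hz
  have hq : 0 < 1 - p := by linarith
  have hb := binPMF_pos hp0 hp1 hi.le
  have hz0 : (0 : ℝ) < z := by positivity
  have hkz : (0 : ℝ) < k - z := sub_pos.mpr (by exact_mod_cast hi)
  have hnum := (binSteinSol_numerator_le hp0.le hp1.le hχ0 hχ1 hi.le).trans
    (mul_le_mul_of_nonneg_left (binPMF_two_tails_le hp0.le hp1.le hi.le) hb.le)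
  have hrec : (1 - p) * z * binPMF k p z = p * (k - i) * binPMF k p i := by
    rw [← binPMF_succ_mul k p i, hz]; push_cast; ring
  unfold binSteinSol
  rw [← hrec, div_sub_div _ _ (by positivity) (by positivity),
    div_le_div_iff₀ (by positivity) (by positivity)]
  beta_reduce
  calc _ = binPMF k p z * ((k + 1) * p * (1 - p)) * ((1 - p) * z * ∑ y ∈ range (z + 1),
          binPMF k p y * (χ y - ∑ j ∈ range (k + 1), binPMF k p j * χ j)
        - p * (k - z) * ∑ y ∈ range z,
          binPMF k p y * (χ y - ∑ j ∈ range (k + 1), binPMF k p j * χ j)) := by ring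
    _ ≤ binPMF k p z * ((k + 1) * p * (1 - p)) * (binPMF k p z * (z * (k - z) / (k + 1))) := by
        gcongr
    _ = _ := by field_simp

theorem sum_mul_sub_binPMF_le (hp0 : 0 < p) (hp1 : p < 1) {h χ : ℕ → ℝ}
    (hh : ∑ x ∈ range (k + 1), h x = 1) (hc : ∑ x ∈ range k, binSteinDefect k p h x = 0)
    (hC : ∀ i < k, ∑ x ∈ range (i + 1), binSteinDefect k p h x ≤ 0)
    (hχ0 : ∀ x, 0 ≤ χ x) (hχ1 : ∀ x, χ x ≤ 1) :
    ∑ x ∈ range (k + 1), χ x * (h x - binPMF k p x)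
      ≤ (∑ i ∈ range k, -∑ x ∈ range (i + 1), binSteinDefect k p h x)
        / ((k + 1) * p * (1 - p)) := by
  set β := ∑ j ∈ range (k + 1), binPMF k p j * χ j
  set F := binSteinSol k p (fun x => χ x - β)
  set C := fun i => ∑ x ∈ range (i + 1), binSteinDefect k p h x
  have hB : 0 < (k + 1) * p * (1 - p) := by
    have : 0 < 1 - p := by linarith
    positivity
  have hg : ∑ y ∈ range (k + 1), binPMF k p y * (χ y - β) = 0 := by
    simp only [mul_sub, sum_sub_distrib, ← sum_mul, sum_binPMF, one_mul, β, sub_self]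
  have hcentre : ∑ x ∈ range (k + 1), χ x * (h x - binPMF k p x)
      = ∑ x ∈ range (k + 1), h x * (χ x - β) := by
    simp only [mul_sub, sub_mul, sum_sub_distrib, ← sum_mul, hh, one_mul, β, mul_comm (χ _)]
  have hparts : ∑ x ∈ range k, binSteinDefect k p h x * F x
      = ∑ i ∈ range (k - 1), (F (i + 1) - F i) * -C i := by
    have := sum_range_by_parts F (binSteinDefect k p h) k
    simp only [smul_eq_mul, hc, mul_zero, zero_sub] at this
    rw [sum_congr rfl fun x _ => mul_comm _ _, this, ← sum_neg_distrib]
    exact sum_congr rfl fun i _ => by ring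
  rw [hcentre, sum_mul_eq_sum_binSteinDefect_mul hp0 hp1 h _ hg, hparts, le_div_iff₀ hB, sum_mul]
  calc ∑ i ∈ range (k - 1), (F (i + 1) - F i) * -C i * ((k + 1) * p * (1 - p))
      ≤ ∑ i ∈ range (k - 1), -C i := by
        refine sum_le_sum fun i hi => ?_
        have hi : i + 1 < k := by have := mem_range.mp hi; omega
        have hΔ := binSteinSol_succ_sub_le hp0 hp1 hχ0 hχ1 hi
        rw [le_div_iff₀ hB] at hΔ
        nlinarith [hC i (by omega)]
    _ ≤ ∑ i ∈ range k, -C i :=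
        sum_le_sum_of_subset_of_nonneg (range_subset_range.mpr (Nat.sub_le k 1))
          fun i hi _ => neg_nonneg.mpr (hC i (mem_range.mp hi))

end Stein

section Hypergeometric

variable {n m k : ℕ}

lemma hypPMF_nonneg (x : ℕ) : 0 ≤ hypPMF n m k x := by
  unfold hypPMF; positivity

lemma sum_hypPMF (hm : m ≤ n) (hk : k ≤ n) : ∑ x ∈ range (k + 1), hypPMF n m k x = 1 := by
  have hv := Nat.add_choose_eq m (n - m) k
  rw [Nat.add_sub_cancel' hm, Finset.Nat.sum_antidiagonal_eq_sum_range_succ_mk] at hv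
  have hpos : (0 : ℝ) < n.choose k := by exact_mod_cast Nat.choose_pos hk
  unfold hypPMF
  rw [← sum_div, div_eq_one_iff_eq hpos.ne']
  exact_mod_cast hv.symm

lemma hypPMF_succ_mul (hm : m ≤ n) {x : ℕ} (hx : x < k) :
    ((n : ℝ) - m - k + x + 1) * (x + 1) * hypPMF n m k (x + 1)
      = (m - x) * (k - x) * hypPMF n m k x := by
  obtain ⟨j, hj⟩ : ∃ j, k - x = j + 1 := ⟨k - x - 1, by omega⟩
  have hjR : (j : ℝ) = k - x - 1 := by
    rw [eq_sub_iff_add_eq, eq_sub_iff_add_eq]; exact_mod_cast (by omega : j + 1 + x = k)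
  have s1 := choose_succ_right_eq_cast m x
  have s2 := choose_succ_right_eq_cast (n - m) j
  rw [Nat.cast_sub hm, hjR] at s2
  unfold hypPMF
  rw [hj, show k - (x + 1) = j by omega]
  rw [mul_div_assoc', mul_div_assoc']
  congr 1
  linear_combination ((n : ℝ) - m - k + x + 1) * (n - m).choose j * s1
    - ((m : ℝ) - x) * m.choose x * s2

lemma sum_range_binSteinDefect_hypPMF (hm : m ≤ n) (hn : 0 < n) {j : ℕ} (hj : j ≤ k) :
    ∑ x ∈ range j, binSteinDefect k (m / n) (hypPMF n m k) x
      = -(j * (k - j) * hypPMF n m k j) / n := by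
  have hn' : (n : ℝ) ≠ 0 := by positivity
  set T : ℕ → ℝ := fun x => x * (k - x) * hypPMF n m k x
  have hstep : ∀ x ∈ range j,
      binSteinDefect k (m / n) (hypPMF n m k) x = (T x - T (x + 1)) / n := by
    intro x hx
    have hrec := hypPMF_succ_mul hm (lt_of_lt_of_le (mem_range.mp hx) hj)
    simp only [binSteinDefect, T]
    rw [eq_div_iff hn']
    field_simp
    push_cast
    linear_combination -hrec
  rw [sum_congr rfl hstep, ← sum_div, sum_range_sub']
  simp [T]

lemma sum_hypPMF_mul_eq_zero (hm : m ≤ n) (ψ : ℕ → ℝ) :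
    ∑ x ∈ range (k + 1), (x * ((n : ℝ) - m - k + x) * ψ x - (m - x) * (k - x) * ψ (x + 1))
      * hypPMF n m k x = 0 := by
  set W : ℕ → ℝ := fun x => x * ((n : ℝ) - m - k + x) * ψ x * hypPMF n m k x
  have hstep : ∀ x ∈ range k, (x * ((n : ℝ) - m - k + x) * ψ x - (m - x) * (k - x) * ψ (x + 1))
      * hypPMF n m k x = W x - W (x + 1) := by
    intro x hx
    have hrec := hypPMF_succ_mul hm (mem_range.mp hx)
    simp only [W]
    push_cast
    linear_combination ψ (x + 1) * hrec
  rw [sum_range_succ, sum_congr rfl hstep, sum_range_sub']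
  simp [W]

lemma sum_mul_sub_mul_hypPMF (hm : m ≤ n) (hk : k ≤ n) :
    n * (n - 1) * ∑ x ∈ range (k + 1), x * ((k : ℝ) - x) * hypPMF n m k x
      = k * (k - 1) * m * (n - m) := by
  have h := sum_hypPMF_mul_eq_zero hm (k := k) fun x => n * k + m - m * k - n * x
  have hψ : ∀ x ∈ range (k + 1), (x * ((n : ℝ) - m - k + x) * (n * k + m - m * k - n * x)
      - (m - x) * (k - x) * (n * k + m - m * k - n * (x + 1 : ℕ))) * hypPMF n m k x
      = n * (n - 1) * (x * (k - x) * hypPMF n m k x) - k * (k - 1) * m * (n - m) * hypPMF n m k x := by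
    intro x _
    push_cast
    ring
  rw [sum_congr rfl hψ, sum_sub_distrib, ← mul_sum, ← mul_sum, sum_hypPMF hm hk] at h
  linarith

lemma sum_neg_sum_range_binSteinDefect_hypPMF (hmn : m < n) (hk : k ≤ n) :
    n ^ 2 * (n - 1) * ∑ i ∈ range k, -∑ x ∈ range (i + 1), binSteinDefect k (m / n) (hypPMF n m k) x
      = k * (k - 1) * m * (n - m) := by
  have hn : 0 < n := by omega
  have hsecond := sum_mul_sub_mul_hypPMF hmn.le hk
  rw [sum_range_succ', Nat.cast_zero, zero_mul, zero_mul, add_zero] at hsecond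
  rw [← hsecond, sum_congr rfl fun i hi => by
      rw [sum_range_binSteinDefect_hypPMF hmn.le hn (mem_range.mp hi : i + 1 ≤ k),
        neg_div, neg_neg],
    ← sum_div]
  field_simp

theorem half_sum_abs_hypPMF_sub_binPMF_le (hm0 : 0 < m) (hmn : m < n) (hk : k ≤ n) :
    1 / 2 * ∑ x ∈ range (k + 1), |hypPMF n m k x - binPMF k (m / n) x|
      ≤ k * (k - 1) / ((k + 1) * (n - 1)) := by
  have hn : 0 < n := by omega
  have hp0 : (0 : ℝ) < m / n := by positivity
  have hp1 : (m : ℝ) / n < 1 := by rw [div_lt_one (by positivity)]; exact_mod_cast hmn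
  have hnm : (n : ℝ) - m ≠ 0 := sub_ne_zero.mpr (by exact_mod_cast hmn.ne')
  have hn1 : (n : ℝ) - 1 ≠ 0 := sub_ne_zero.mpr (by exact_mod_cast (by omega : n ≠ 1))
  have hC : ∀ i < k, ∑ x ∈ range (i + 1), binSteinDefect k (m / n) (hypPMF n m k) x ≤ 0 := by
    intro i hi
    have hki : (0 : ℝ) ≤ k - (i + 1 : ℕ) := sub_nonneg.mpr (by exact_mod_cast hi)
    have := hypPMF_nonneg (n := n) (m := m) (k := k) (i + 1)
    rw [sum_range_binSteinDefect_hypPMF hmn.le hn hi, neg_div, neg_nonpos]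
    positivity
  have hc : ∑ x ∈ range k, binSteinDefect k (m / n) (hypPMF n m k) x = 0 := by
    rw [sum_range_binSteinDefect_hypPMF hmn.le hn le_rfl]; simp
  rw [half_sum_abs_sub_eq_sum_posPart _ _ _ (by rw [sum_hypPMF hmn.le hk, sum_binPMF])]
  simp only [posPart_eq_ite_mul]
  refine (sum_mul_sub_binPMF_le hp0 hp1 (sum_hypPMF hmn.le hk) hc hC
    (fun x => by split_ifs <;> norm_num) (fun x => by split_ifs <;> norm_num)).trans (le_of_eq ?_)
  have hsum := sum_neg_sum_range_binSteinDefect_hypPMF hmn hk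
  field_simp
  linear_combination hsum

lemma hypPMF_zero_red (hk : k ≤ n) (x : ℕ) : hypPMF n 0 k x = binPMF k 0 x := by
  have hpos : (n.choose k : ℝ) ≠ 0 := by exact_mod_cast (Nat.choose_pos hk).ne'
  rcases x with _ | x
  · simp [hypPMF, binPMF, hpos]
  · simp [hypPMF, binPMF]

lemma hypPMF_all_red (hk : k ≤ n) {x : ℕ} (hx : x ≤ k) : hypPMF n n k x = binPMF k 1 x := by
  have hpos : (n.choose k : ℝ) ≠ 0 := by exact_mod_cast (Nat.choose_pos hk).ne'
  rcases hx.eq_or_lt with rfl | hx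
  · simp [hypPMF, binPMF, hpos]
  · simp [hypPMF, binPMF, Nat.choose_eq_zero_of_lt (by omega : 0 < k - x),
      zero_pow (by omega : k - x ≠ 0)]

end Hypergeometric

theorem tv_hypergeometric_binomial_le_general (n m k : ℕ) (hm : m ≤ n) (hk : k ≤ n) :
    (1 / 2) * ∑ i ∈ Finset.range (k + 1),
        |hypPMF n m k i - binPMF k ((m : ℝ) / n) i| ≤ (k : ℝ) / n := by
  rcases Nat.eq_zero_or_pos m with rfl | hm0
  · rw [Nat.cast_zero, zero_div,
      sum_eq_zero fun x _ => by rw [hypPMF_zero_red hk, sub_self, abs_zero], mul_zero]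
    positivity
  rcases hm.eq_or_lt with rfl | hmn
  · rw [div_self (by positivity), sum_eq_zero fun x hx => by
      rw [hypPMF_all_red hk (Nat.lt_succ_iff.mp (mem_range.mp hx)), sub_self, abs_zero], mul_zero]
    positivity
  refine (half_sum_abs_hypPMF_sub_binPMF_le hm0 hmn hk).trans ?_
  have hn1 : (1 : ℝ) < n := by exact_mod_cast (by omega : 1 < n)
  have hkn : (k : ℝ) ≤ n := by exact_mod_cast hk
  rw [div_le_div_iff₀ (by positivity) (by positivity)]
  nlinarith [Nat.cast_nonneg (α := ℝ) k]

/-- TV distance between the hypergeometric distribution `H(n,m,k)`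
and the binomial distribution `B(k, m/n)` is at most `k/n`. -/
theorem tv_hypergeometric_binomial_le (n m k : ℕ) (hn : 0 < n) (hm : m ≤ n) (hk : k ≤ n) :
    (1 / 2) * ∑ i ∈ Finset.range (k + 1),
        |hypPMF n m k i - binPMF k ((m : ℝ) / n) i| ≤ (k : ℝ) / n :=
  tv_hypergeometric_binomial_le_general n m k hm hk
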